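/- If $w \in A_\infty$ can be factorized as $w = uv$ with $u \in A_1$ and $v \in RH_\infty$, then the Fujii–Wilson $A_\infty$ constant of $w$ satisfies $[w]_{A_\infty} \lesssim [u]_{A_1}^2 [v]_{RH_\infty}^2$, up to a dimensional constant. -/

import Mathlib

open MeasureTheory ENNReal Set Filter

noncomputable section

/-- The measure with density `w` with respect to the ambient volume. -/
def wMeasure {α : Type*} [MeasureSpace α] (w : α → ℝ) : Measure α :=
  (volume : Measure α).withDensity fun x => ENNReal.ofReal (w x)

/-- The weak Lorentz `L^{q,∞}(μ)` quasi-norm. -/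
def wLorentz {α E : Type*} [MeasurableSpace α] [Norm E] (q : ℝ) (μ : Measure α)
    (g : α → E) : ℝ≥0∞ :=
  ⨆ (t : ℝ) (_ : 0 < t), ENNReal.ofReal t * μ {x | t < ‖g x‖} ^ (1 / q)

/-- The weak Lorentz `L^{q,∞}(μ)` quasi-norm, for `ℝ≥0∞`-valued functions. -/
def wLorentzE {α : Type*} [MeasurableSpace α] (q : ℝ) (μ : Measure α)
    (g : α → ℝ≥0∞) : ℝ≥0∞ :=
  ⨆ (t : ℝ) (_ : 0 < t), ENNReal.ofReal t * μ {x | ENNReal.ofReal t < g x} ^ (1 / q)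

/-- The Lorentz `L^{p,r}(μ)` quasi-norm (computed via the distribution function). -/
def lorentz {α E : Type*} [MeasurableSpace α] [Norm E] (p r : ℝ) (μ : Measure α)
    (g : α → E) : ℝ≥0∞ :=
  (∫⁻ t in Set.Ioi (0 : ℝ), ENNReal.ofReal (t ^ (r - 1)) * μ {x | t < ‖g x‖} ^ (r / p)) ^ (1 / r)

/-- A weight: a locally integrable, a.e. positive function. -/
def IsWeight {α : Type*} [MeasureSpace α] [TopologicalSpace α] (w : α → ℝ) : Prop :=
  LocallyIntegrable w volume ∧ ∀ᵐ x : α ∂volume, 0 < w x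

abbrev Rn (n : ℕ) : Type := Fin n → ℝ

/-- The axis-parallel closed cube with center `c` and half side-length `r`. -/
def cube {n : ℕ} (c : Rn n) (r : ℝ) : Set (Rn n) := {x | ∀ i, |x i - c i| ≤ r}

/-- The Hardy–Littlewood maximal operator over cubes. -/
def maxOp {n : ℕ} (f : Rn n → ℝ) (x : Rn n) : ℝ≥0∞ :=
  ⨆ (c : Rn n) (r : ℝ) (_ : 0 < r) (_ : x ∈ cube c r),
    (∫⁻ y in cube c r, ENNReal.ofReal |f y|) / volume (cube c r)

/-- The `A₁` constant: the least `C` with `Mu ≤ C u` a.e. -/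
def A1Const {n : ℕ} (u : Rn n → ℝ) : ℝ≥0∞ :=
  sInf {C : ℝ≥0∞ | ∀ᵐ x : Rn n ∂volume, maxOp u x ≤ C * ENNReal.ofReal (u x)}

def MemA1 {n : ℕ} (u : Rn n → ℝ) : Prop := IsWeight u ∧ A1Const u < ⊤

/-- The `RH∞` constant `sup_Q (ess sup_Q v) |Q| / v(Q)`. -/
def RHinfConst {n : ℕ} (v : Rn n → ℝ) : ℝ≥0∞ :=
  ⨆ (c : Rn n) (r : ℝ) (_ : 0 < r),
    essSup (fun x => ENNReal.ofReal (v x)) (volume.restrict (cube c r)) * volume (cube c r)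
      / wMeasure v (cube c r)

/-- The Fujii–Wilson `A∞` constant. -/
def FWConst {n : ℕ} (w : Rn n → ℝ) : ℝ≥0∞ :=
  ⨆ (c : Rn n) (r : ℝ) (_ : 0 < r),
    (∫⁻ x in cube c r, maxOp ((cube c r).indicator w) x) / wMeasure w (cube c r)

/-- The Muckenhoupt `A_q` constant, `q > 1`. -/
def AqConst {n : ℕ} (q : ℝ) (w : Rn n → ℝ) : ℝ≥0∞ :=
  ⨆ (c : Rn n) (r : ℝ) (_ : 0 < r),
    (wMeasure w (cube c r) / volume (cube c r)) *
      ((∫⁻ x in cube c r, ENNReal.ofReal (w x ^ (1 - q / (q - 1)))) / volume (cube c r)) ^ (q - 1)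

/-- Membership in `A∞ = ⋃_{q>1} A_q`. -/
def MemAinf {n : ℕ} (w : Rn n → ℝ) : Prop := ∃ q : ℝ, 1 < q ∧ AqConst q w < ⊤

/-- The restricted `A_q^𝓡` constant. -/
def AqRConst {n : ℕ} (q : ℝ) (w : Rn n → ℝ) : ℝ≥0∞ :=
  ⨆ (c : Rn n) (r : ℝ) (_ : 0 < r) (E : Set (Rn n)) (_ : MeasurableSet E)
    (_ : E ⊆ cube c r) (_ : 0 < volume E),
    volume E / volume (cube c r) * (wMeasure w (cube c r) / wMeasure w E) ^ (1 / q)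

/-- The constant `[w]_{RH∞¹} = inf {[u]_{A₁}[v]_{RH∞} : w = uv}`. -/
def RH1Const {n : ℕ} (w : Rn n → ℝ) : ℝ≥0∞ :=
  sInf {C : ℝ≥0∞ | ∃ u v : Rn n → ℝ, (∀ x, w x = u x * v x) ∧ MemA1 u ∧ IsWeight v ∧
    RHinfConst v < ⊤ ∧ C = A1Const u * RHinfConst v}

/-- `S f = (M(|Tf|^{1/2}))²`. -/
def Sop {n : ℕ} (T : (Rn n → ℝ) → Rn n → ℝ) (f : Rn n → ℝ) (x : Rn n) : ℝ≥0∞ :=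
  maxOp (fun y => |T f y| ^ ((2 : ℝ)⁻¹)) x ^ (2 : ℝ)

/-- Condition (C): for some `p₀` and increasing `φ`,
`∫ (Sf)^{p₀} w ≤ φ([w]_{A∞}) ∫ (Mf)^{p₀} w` for all `w ∈ A∞`. -/
def ConditionC {n : ℕ} (T : (Rn n → ℝ) → Rn n → ℝ) : Prop :=
  ∃ p0 : ℝ, 0 < p0 ∧ ∃ φ : ℝ≥0∞ → ℝ≥0∞, Monotone φ ∧
    ∀ w : Rn n → ℝ, IsWeight w → MemAinf w → ∀ f : Rn n → ℝ, Measurable f →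
      (∫⁻ x, Sop T f x ^ p0 * ENNReal.ofReal (w x)) < ⊤ →
      (∫⁻ x, Sop T f x ^ p0 * ENNReal.ofReal (w x)) ≤
        φ (FWConst w) * ∫⁻ x, maxOp f x ^ p0 * ENNReal.ofReal (w x)



/-!
On a cube `Q`, put `V = ess sup_Q v` and `K = ⨍_Q u`. Since `u ∈ A₁` we have
`K ≤ Mu ≤ [u]_{A₁} u` a.e. on `Q`, hence `K v(Q) ≤ [u]_{A₁} w(Q)`, while
`M(w χ_Q) ≤ V Mu ≤ V [u]_{A₁} u`. Therefore
`∫_Q M(w χ_Q) ≤ [u]_{A₁} (V |Q|) K ≤ [u]_{A₁} [v]_{RH∞} v(Q) K ≤ [u]_{A₁}² [v]_{RH∞} w(Q)`,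
and `[v]_{RH∞} ≥ 1` turns this into the claimed bound with constant `1`.
-/

section Cube

variable {n : ℕ}

lemma cube_eq_pi (c : Rn n) (r : ℝ) :
    cube c r = Set.pi univ fun i => Icc (c i - r) (c i + r) := by
  ext x
  simp only [cube, mem_ofPred_eq, Set.mem_pi, mem_univ, mem_Icc, forall_true_left, abs_sub_le_iff,
    sub_le_iff_le_add', add_comm r]
  exact forall_congr' fun _ => and_comm

lemma measurableSet_cube (c : Rn n) (r : ℝ) : MeasurableSet (cube c r) := by
  rw [cube_eq_pi]; exact MeasurableSet.univ_pi fun _ => measurableSet_Icc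

lemma isCompact_cube (c : Rn n) (r : ℝ) : IsCompact (cube c r) := by
  rw [cube_eq_pi]; exact isCompact_univ_pi fun _ => isCompact_Icc

lemma volume_cube (c : Rn n) (r : ℝ) : volume (cube c r) = ENNReal.ofReal (2 * r) ^ n := by
  have side : ∀ i, c i + r - (c i - r) = 2 * r := fun _ => by ring
  rw [cube_eq_pi, volume_pi_pi]
  simp [Real.volume_Icc, side]

lemma volume_cube_pos (c : Rn n) {r : ℝ} (hr : 0 < r) : 0 < volume (cube c r) := by
  rw [volume_cube]; exact ENNReal.pow_pos (by simpa using hr) n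

lemma volume_cube_ne_top (c : Rn n) (r : ℝ) : volume (cube c r) ≠ ⊤ := by
  rw [volume_cube]; exact pow_ne_top ofReal_ne_top

end Cube

section WeightedMeasure

variable {n : ℕ} {v : Rn n → ℝ}

lemma wMeasure_cube (v : Rn n → ℝ) (c : Rn n) (r : ℝ) :
    wMeasure v (cube c r) = ∫⁻ y in cube c r, ENNReal.ofReal (v y) :=
  withDensity_apply _ (measurableSet_cube c r)

lemma wMeasure_cube_ne_top (hv : LocallyIntegrable v volume) (c : Rn n) (r : ℝ) :
    wMeasure v (cube c r) ≠ ⊤ := by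
  rw [wMeasure_cube]
  exact (hv.integrableOn_isCompact (isCompact_cube c r)).setLIntegral_lt_top.ne

lemma wMeasure_cube_ne_zero (hv : IsWeight v) (c : Rn n) {r : ℝ} (hr : 0 < r) :
    wMeasure v (cube c r) ≠ 0 := by
  rw [wMeasure, Ne,
    withDensity_apply_eq_zero' hv.1.aestronglyMeasurable.aemeasurable.ennreal_ofReal]
  have hsupp :
      ({x | ENNReal.ofReal (v x) ≠ 0} ∩ cube c r : Set (Rn n)) =ᵐ[volume] cube c r := by
    filter_upwards [hv.2] with x hx
    exact propext ⟨And.right, And.intro (ENNReal.ofReal_pos.2 hx).ne'⟩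
  rw [measure_congr hsupp]
  exact (volume_cube_pos c hr).ne'

lemma wMeasure_cube_le_essSup_mul_volume (v : Rn n → ℝ) (c : Rn n) (r : ℝ) :
    wMeasure v (cube c r) ≤
      essSup (fun x => ENNReal.ofReal (v x)) (volume.restrict (cube c r)) * volume (cube c r) := by
  rw [wMeasure_cube, ← setLIntegral_const]
  exact lintegral_mono_ae (ENNReal.ae_le_essSup _)

end WeightedMeasure

section Maximal

variable {n : ℕ}

lemma setLIntegral_div_volume_le_maxOp (f : Rn n → ℝ) {x c : Rn n} {r : ℝ} (hr : 0 < r)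
    (hx : x ∈ cube c r) :
    (∫⁻ y in cube c r, ENNReal.ofReal |f y|) / volume (cube c r) ≤ maxOp f x :=
  le_iSup_of_le c (le_iSup_of_le r (le_iSup_of_le hr (le_iSup_of_le hx le_rfl)))

lemma maxOp_le_mul_maxOp {f g : Rn n → ℝ} {V : ℝ≥0∞} (hV : V ≠ ⊤)
    (hgf : ∀ᵐ y ∂volume, ENNReal.ofReal |g y| ≤ V * ENNReal.ofReal |f y|) (x : Rn n) :
    maxOp g x ≤ V * maxOp f x := by
  refine iSup_le fun c => iSup_le fun r => iSup_le fun hr => iSup_le fun hx => ?_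
  calc (∫⁻ y in cube c r, ENNReal.ofReal |g y|) / volume (cube c r)
      ≤ (∫⁻ y in cube c r, V * ENNReal.ofReal |f y|) / volume (cube c r) := by
        gcongr ?_ / _
        exact lintegral_mono_ae (ae_restrict_of_ae hgf)
    _ = V * ((∫⁻ y in cube c r, ENNReal.ofReal |f y|) / volume (cube c r)) := by
        rw [lintegral_const_mul' _ _ hV, mul_div_assoc]
    _ ≤ V * maxOp f x := by
        gcongr
        exact setLIntegral_div_volume_le_maxOp f hr hx

lemma maxOp_indicator_mul_le {u v : Rn n → ℝ} (hv : ∀ᵐ x ∂volume, 0 < v x) (c : Rn n) (r : ℝ)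
    (hV : essSup (fun x => ENNReal.ofReal (v x)) (volume.restrict (cube c r)) ≠ ⊤) (x : Rn n) :
    maxOp ((cube c r).indicator fun y => u y * v y) x ≤
      essSup (fun x => ENNReal.ofReal (v x)) (volume.restrict (cube c r)) * maxOp u x := by
  refine maxOp_le_mul_maxOp hV ?_ x
  have hv_le : ∀ᵐ y ∂volume, y ∈ cube c r → ENNReal.ofReal (v y) ≤
      essSup (fun x => ENNReal.ofReal (v x)) (volume.restrict (cube c r)) :=
    (ae_restrict_iff' (measurableSet_cube c r)).1 (ENNReal.ae_le_essSup _)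
  filter_upwards [hv_le, hv] with y hyV hy
  by_cases hyQ : y ∈ cube c r
  · rw [indicator_of_mem hyQ, abs_mul, abs_of_pos hy, ENNReal.ofReal_mul (abs_nonneg _),
      mul_comm]
    gcongr
    exact hyV hyQ
  · simp [indicator_of_notMem hyQ]

end Maximal

lemma ae_le_sInf_mul {α : Type*} [MeasurableSpace α] {μ : Measure α} {f g : α → ℝ≥0∞}
    (hg : ∀ x, g x ≠ ⊤) (hS : {C | ∀ᵐ x ∂μ, f x ≤ C * g x}.Nonempty) :
    ∀ᵐ x ∂μ, f x ≤ sInf {C | ∀ᵐ x ∂μ, f x ≤ C * g x} * g x := by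
  obtain ⟨C, -, hC, hCS⟩ := exists_seq_tendsto_sInf hS (OrderBot.bddBelow _)
  filter_upwards [ae_all_iff.2 hCS] with x hx
  exact ge_of_tendsto' (ENNReal.Tendsto.mul_const hC (Or.inr (hg x))) hx

namespace MemA1

variable {n : ℕ} {u : Rn n → ℝ}

lemma ae_maxOp_le (hu : MemA1 u) :
    ∀ᵐ x ∂volume, maxOp u x ≤ A1Const u * ENNReal.ofReal (u x) :=
  ae_le_sInf_mul (fun _ => ofReal_ne_top)
    (nonempty_iff_ne_empty.2 fun h => hu.2.ne (by rw [A1Const, h, sInf_empty]))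

lemma setLIntegral_div_volume_mul_wMeasure_le (hu : MemA1 u) (v : Rn n → ℝ) (c : Rn n)
    {r : ℝ} (hr : 0 < r) :
    (∫⁻ y in cube c r, ENNReal.ofReal |u y|) / volume (cube c r) * wMeasure v (cube c r) ≤
      A1Const u * wMeasure (fun x => u x * v x) (cube c r) := by
  have hK : (∫⁻ y in cube c r, ENNReal.ofReal |u y|) / volume (cube c r) ≠ ⊤ :=
    ENNReal.div_ne_top (IntegrableOn.setLIntegral_lt_top
      (hu.1.1.integrableOn_isCompact (isCompact_cube c r)).abs).ne (volume_cube_pos c hr).ne'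
  rw [wMeasure_cube, wMeasure_cube, ← lintegral_const_mul' _ _ hK,
    ← lintegral_const_mul' _ _ hu.2.ne]
  refine lintegral_mono_ae ?_
  filter_upwards [ae_restrict_mem (measurableSet_cube c r), ae_restrict_of_ae hu.ae_maxOp_le,
    ae_restrict_of_ae hu.1.2] with x hx hMx hux
  rw [ENNReal.ofReal_mul hux.le, ← mul_assoc]
  gcongr
  exact (setLIntegral_div_volume_le_maxOp u hr hx).trans hMx

end MemA1

section ReverseHolder

variable {n : ℕ} {v : Rn n → ℝ}

lemma essSup_mul_volume_le_RHinfConst_mul (hv : IsWeight v) (c : Rn n) {r : ℝ} (hr : 0 < r) :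
    essSup (fun x => ENNReal.ofReal (v x)) (volume.restrict (cube c r)) * volume (cube c r) ≤
      RHinfConst v * wMeasure v (cube c r) :=
  (ENNReal.div_le_iff_le_mul (Or.inl (wMeasure_cube_ne_zero hv c hr))
    (Or.inl (wMeasure_cube_ne_top hv.1 c r))).1
    (le_iSup_of_le c (le_iSup_of_le r (le_iSup_of_le hr le_rfl)))

lemma one_le_RHinfConst (hv : IsWeight v) : 1 ≤ RHinfConst v := by
  calc (1 : ℝ≥0∞) = wMeasure v (cube 0 1) / wMeasure v (cube 0 1) :=
        (ENNReal.div_self (wMeasure_cube_ne_zero hv 0 one_pos) (wMeasure_cube_ne_top hv.1 0 1)).symm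
    _ ≤ essSup (fun x => ENNReal.ofReal (v x)) (volume.restrict (cube 0 1)) * volume (cube 0 1) /
          wMeasure v (cube 0 1) := by
        gcongr
        exact wMeasure_cube_le_essSup_mul_volume v 0 1
    _ ≤ RHinfConst v := le_iSup_of_le 0 (le_iSup_of_le 1 (le_iSup_of_le one_pos le_rfl))

end ReverseHolder

lemma FWConst_mul_le {n : ℕ} {u v : Rn n → ℝ} (hu : MemA1 u) (hv : IsWeight v)
    (hRH : RHinfConst v ≠ ⊤) :
    FWConst (fun x => u x * v x) ≤ A1Const u ^ 2 * RHinfConst v := by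
  refine iSup_le fun c => iSup_le fun r => iSup_le fun hr => ENNReal.div_le_of_le_mul ?_
  set Q := cube c r
  set A := A1Const u
  set RH := RHinfConst v
  set V := essSup (fun x => ENNReal.ofReal (v x)) (volume.restrict Q)
  set K := (∫⁻ y in Q, ENNReal.ofReal |u y|) / volume Q
  have hVQ : V * volume Q ≤ RH * wMeasure v Q := essSup_mul_volume_le_RHinfConst_mul hv c hr
  have hV : V ≠ ⊤ := by
    intro hVtop
    rw [hVtop, top_mul (volume_cube_pos c hr).ne'] at hVQ
    exact mul_ne_top hRH (wMeasure_cube_ne_top hv.1 c r) (top_le_iff.1 hVQ)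
  have hM : ∀ᵐ x ∂volume.restrict Q,
      maxOp (Q.indicator fun y => u y * v y) x ≤ V * (A * ENNReal.ofReal |u x|) := by
    filter_upwards [ae_restrict_of_ae hu.ae_maxOp_le, ae_restrict_of_ae hu.1.2] with x hMx hux
    rw [abs_of_pos hux]
    exact (maxOp_indicator_mul_le hv.2 c r hV x).trans (by gcongr)
  calc ∫⁻ x in Q, maxOp (Q.indicator fun y => u y * v y) x
      ≤ ∫⁻ x in Q, V * (A * ENNReal.ofReal |u x|) := lintegral_mono_ae hM
    _ = A * (V * volume Q) * K := by
        rw [lintegral_const_mul' _ _ hV, lintegral_const_mul' _ _ hu.2.ne, mul_assoc A,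
          mul_assoc V, ENNReal.mul_div_cancel (volume_cube_pos c hr).ne' (volume_cube_ne_top c r)]
        ring
    _ ≤ A * (RH * wMeasure v Q) * K := by gcongr
    _ = A * RH * (K * wMeasure v Q) := by ring
    _ ≤ A * RH * (A * wMeasure (fun x => u x * v x) Q) :=
        by gcongr A * RH * ?_; exact hu.setLIntegral_div_volume_mul_wMeasure_le v c hr
    _ = A ^ 2 * RH * wMeasure (fun x => u x * v x) Q := by ring

/-- If `w = uv` with `u ∈ A₁` and `v ∈ RH∞`, then `[w]_{A∞} ≲ [u]_{A₁}² [v]_{RH∞}²`,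
up to a dimensional constant. -/
theorem stmt0 (n : ℕ) :
    ∃ C : ℝ≥0∞, C < ⊤ ∧ ∀ u v : Rn n → ℝ, MemA1 u → IsWeight v → RHinfConst v < ⊤ →
      FWConst (fun x => u x * v x) ≤ C * A1Const u ^ 2 * RHinfConst v ^ 2 := by
  refine ⟨1, one_lt_top, fun u v hu hv hRH => ?_⟩
  calc FWConst (fun x => u x * v x)
      ≤ A1Const u ^ 2 * RHinfConst v := FWConst_mul_le hu hv hRH.ne
    _ ≤ A1Const u ^ 2 * RHinfConst v * RHinfConst v :=
        le_mul_of_one_le_right' (one_le_RHinfConst hv)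
    _ = 1 * A1Const u ^ 2 * RHinfConst v ^ 2 := by ring

end
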